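/- arXiv:quant-ph/0205065 — 3 statements merged into one kernel-verified Lean document; each statement's English description precedes it below -/
import Mathlib

section
/- For the Hadamard walk the following three sets of initial qubit states coincide: Φ_⊥ = {φ=(α,β)ᵗ : |α|²+|β|²=1, |α|=|β|, α·conj(β)+conj(α)·β=0}, Φ_s = {φ : |α|²+|β|²=1 and ‖Ψ_k^{(n)}(φ)‖ = ‖Ψ_{-k}^{(n)}(φ)‖ for all n ∈ ℤ₊ and k ∈ ℤ}, and Φ_0 = {φ : |α|²+|β|²=1 and E(X_n^φ)=0 for all n ∈ ℤ₊}. That is, Φ_⊥ = Φ_s = Φ_0. -/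
noncomputable section
open Matrix

/-- `P = (1/√2)·[[1,1],[0,0]]` -/
def matP : Matrix (Fin 2) (Fin 2) ℂ := (Real.sqrt 2 : ℂ)⁻¹ • !![1, 1; 0, 0]

/-- `Q = (1/√2)·[[0,0],[1,-1]]` -/
def matQ : Matrix (Fin 2) (Fin 2) ℂ := (Real.sqrt 2 : ℂ)⁻¹ • !![0, 0; 1, -1]

/-- The amplitudes of the Hadamard walk: `Ψ_k^{(0)}(φ) = φ` if `k = 0` and `0` otherwise,
and `Ψ_k^{(n+1)}(φ) = Q·Ψ_{k-1}^{(n)}(φ) + P·Ψ_{k+1}^{(n)}(φ)`. -/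
def Psi (φ : Fin 2 → ℂ) : ℕ → ℤ → (Fin 2 → ℂ)
  | 0, k => if k = 0 then φ else 0
  | n+1, k => matQ.mulVec (Psi φ n (k-1)) + matP.mulVec (Psi φ n (k+1))

/-- The Euclidean norm of a vector in `ℂ²`. -/
def vnorm (v : Fin 2 → ℂ) : ℝ := ‖(EuclideanSpace.equiv (Fin 2) ℂ).symm v‖

/-- The expectation `E(X_n^φ) = Σ_{k ∈ ℤ} k·‖Ψ_k^{(n)}(φ)‖²`. -/
def expectation (φ : Fin 2 → ℂ) (n : ℕ) : ℝ := ∑' k : ℤ, (k : ℝ) * (vnorm (Psi φ n k))^2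

/-- `Φ_⊥`: normalized qubit states with `|α| = |β|` and `α·conj(β) + conj(α)·β = 0`. -/
def PhiPerp : Set (Fin 2 → ℂ) :=
  {φ | ‖φ 0‖ ^ 2 + ‖φ 1‖ ^ 2 = 1 ∧
       ‖φ 0‖ = ‖φ 1‖ ∧
       φ 0 * (starRingEnd ℂ) (φ 1) + (starRingEnd ℂ) (φ 0) * φ 1 = 0}

/-- `Φ_s`: normalized qubit states with symmetric walk distribution at all times. -/
def PhiS : Set (Fin 2 → ℂ) :=
  {φ | ‖φ 0‖ ^ 2 + ‖φ 1‖ ^ 2 = 1 ∧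
       ∀ (n : ℕ) (k : ℤ), vnorm (Psi φ n k) = vnorm (Psi φ n (-k))}

/-- `Φ_0`: normalized qubit states whose walk has zero mean at all times. -/
def Phi0 : Set (Fin 2 → ℂ) :=
  {φ | ‖φ 0‖ ^ 2 + ‖φ 1‖ ^ 2 = 1 ∧
       ∀ n : ℕ, expectation φ n = 0}

/-! ### Auxiliary lemmas -/

lemma psi_zero' (φ : Fin 2 → ℂ) (k : ℤ) : Psi φ 0 k = if k = 0 then φ else 0 := rfl

lemma psi_succ (φ : Fin 2 → ℂ) (n : ℕ) (k : ℤ) :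
    Psi φ (n+1) k = matQ.mulVec (Psi φ n (k-1)) + matP.mulVec (Psi φ n (k+1)) := rfl

lemma matP_mulVec (v : Fin 2 → ℂ) :
    matP.mulVec v = ![(Real.sqrt 2 : ℂ)⁻¹ * (v 0 + v 1), 0] := by
  funext i
  fin_cases i <;> simp [matP, Matrix.mulVec, dotProduct, Fin.sum_univ_two] <;> ring_nf

lemma matQ_mulVec (v : Fin 2 → ℂ) :
    matQ.mulVec v = ![0, (Real.sqrt 2 : ℂ)⁻¹ * (v 0 - v 1)] := by
  funext i
  fin_cases i <;> simp [matQ, Matrix.mulVec, dotProduct, Fin.sum_univ_two] <;> ring_nf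

lemma psi_zero_of_lt (φ : Fin 2 → ℂ) : ∀ (n : ℕ) (k : ℤ), (n : ℤ) < |k| → Psi φ n k = 0 := by
  intro n
  induction n with
  | zero =>
      intro k hk
      have : k ≠ 0 := by intro h; simp [h] at hk
      simp [Psi, this]
  | succ n ih =>
      intro k hk
      have h1 : (n : ℤ) < |k - 1| := by
        rcases abs_cases k with ⟨h, _⟩ | ⟨h, _⟩ <;> rcases abs_cases (k-1) with ⟨h', _⟩ | ⟨h', _⟩ <;>
          push_cast at hk ⊢ <;> omega
      have h2 : (n : ℤ) < |k + 1| := by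
        rcases abs_cases k with ⟨h, _⟩ | ⟨h, _⟩ <;> rcases abs_cases (k+1) with ⟨h', _⟩ | ⟨h', _⟩ <;>
          push_cast at hk ⊢ <;> omega
      rw [Psi, ih _ h1, ih _ h2, Matrix.mulVec_zero, Matrix.mulVec_zero, add_zero]

local notation "c" => ((Real.sqrt 2 : ℂ))⁻¹

lemma psi1_neg1 (φ : Fin 2 → ℂ) : Psi φ 1 (-1) = ![c * (φ 0 + φ 1), 0] := by
  rw [show Psi φ 1 (-1) = Psi φ (0+1) (-1) from rfl, psi_succ,
    show (-1:ℤ)-1 = -2 by norm_num, show (-1:ℤ)+1 = 0 by norm_num]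
  rw [matP_mulVec, matQ_mulVec]
  norm_num [psi_zero', matP_mulVec, matQ_mulVec]

lemma psi1_one (φ : Fin 2 → ℂ) : Psi φ 1 1 = ![0, c * (φ 0 - φ 1)] := by
  rw [show Psi φ 1 1 = Psi φ (0+1) 1 from rfl, psi_succ,
    show (1:ℤ)-1 = 0 by norm_num, show (1:ℤ)+1 = 2 by norm_num]
  rw [matP_mulVec, matQ_mulVec]
  norm_num [psi_zero', matP_mulVec, matQ_mulVec]

lemma psi1_zero (φ : Fin 2 → ℂ) : Psi φ 1 0 = 0 := by
  rw [show Psi φ 1 0 = Psi φ (0+1) 0 from rfl, psi_succ,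
    show (0:ℤ)-1 = -1 by norm_num, show (0:ℤ)+1 = 1 by norm_num]
  norm_num [psi_zero', matP_mulVec, matQ_mulVec]

lemma psi2_neg2 (φ : Fin 2 → ℂ) : Psi φ 2 (-2) = ![c * (c * (φ 0 + φ 1)), 0] := by
  rw [show Psi φ 2 (-2) = Psi φ (1+1) (-2) from rfl, psi_succ,
    show (-2:ℤ)-1 = -3 by norm_num, show (-2:ℤ)+1 = -1 by norm_num,
    psi_zero_of_lt φ 1 (-3) (by norm_num), psi1_neg1, matP_mulVec, matQ_mulVec]
  funext i; fin_cases i <;> simp <;> ring_nf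

lemma psi2_zero (φ : Fin 2 → ℂ) :
    Psi φ 2 0 = ![c * (c * (φ 0 - φ 1)), c * (c * (φ 0 + φ 1))] := by
  rw [show Psi φ 2 0 = Psi φ (1+1) 0 from rfl, psi_succ,
    show (0:ℤ)-1 = -1 by norm_num, show (0:ℤ)+1 = 1 by norm_num,
    psi1_neg1, psi1_one, matP_mulVec, matQ_mulVec]
  funext i; fin_cases i <;> simp <;> ring_nf

lemma psi2_two (φ : Fin 2 → ℂ) : Psi φ 2 2 = ![0, -(c * (c * (φ 0 - φ 1)))] := by
  rw [show Psi φ 2 2 = Psi φ (1+1) 2 from rfl, psi_succ,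
    show (2:ℤ)-1 = 1 by norm_num, show (2:ℤ)+1 = 3 by norm_num,
    psi_zero_of_lt φ 1 3 (by norm_num), psi1_one, matP_mulVec, matQ_mulVec]
  funext i; fin_cases i <;> simp <;> ring_nf

lemma psi2_neg1 (φ : Fin 2 → ℂ) : Psi φ 2 (-1) = 0 := by
  rw [show Psi φ 2 (-1) = Psi φ (1+1) (-1) from rfl, psi_succ,
    show (-1:ℤ)-1 = -2 by norm_num, show (-1:ℤ)+1 = 0 by norm_num,
    psi_zero_of_lt φ 1 (-2) (by norm_num), psi1_zero, Matrix.mulVec_zero, Matrix.mulVec_zero,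
    add_zero]

lemma psi2_one (φ : Fin 2 → ℂ) : Psi φ 2 1 = 0 := by
  rw [show Psi φ 2 1 = Psi φ (1+1) 1 from rfl, psi_succ,
    show (1:ℤ)-1 = 0 by norm_num, show (1:ℤ)+1 = 2 by norm_num,
    psi_zero_of_lt φ 1 2 (by norm_num), psi1_zero, Matrix.mulVec_zero, Matrix.mulVec_zero,
    add_zero]

lemma psi3_neg3 (φ : Fin 2 → ℂ) : Psi φ 3 (-3) = ![c * (c * (c * (φ 0 + φ 1))), 0] := by
  rw [show Psi φ 3 (-3) = Psi φ (2+1) (-3) from rfl, psi_succ,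
    show (-3:ℤ)-1 = -4 by norm_num, show (-3:ℤ)+1 = -2 by norm_num,
    psi_zero_of_lt φ 2 (-4) (by norm_num), psi2_neg2, matP_mulVec, Matrix.mulVec_zero]
  funext i; fin_cases i <;> simp <;> ring_nf

lemma psi3_neg1 (φ : Fin 2 → ℂ) :
    Psi φ 3 (-1) = ![2 * (c * (c * (c * φ 0))), c * (c * (c * (φ 0 + φ 1)))] := by
  rw [show Psi φ 3 (-1) = Psi φ (2+1) (-1) from rfl, psi_succ,
    show (-1:ℤ)-1 = -2 by norm_num, show (-1:ℤ)+1 = 0 by norm_num,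
    psi2_neg2, psi2_zero, matP_mulVec, matQ_mulVec]
  funext i; fin_cases i <;> simp <;> ring_nf

lemma psi3_one (φ : Fin 2 → ℂ) :
    Psi φ 3 1 = ![-(c * (c * (c * (φ 0 - φ 1)))), -(2 * (c * (c * (c * φ 1))))] := by
  rw [show Psi φ 3 1 = Psi φ (2+1) 1 from rfl, psi_succ,
    show (1:ℤ)-1 = 0 by norm_num, show (1:ℤ)+1 = 2 by norm_num,
    psi2_zero, psi2_two, matP_mulVec, matQ_mulVec]
  funext i; fin_cases i <;> simp <;> ring_nf

lemma psi3_three (φ : Fin 2 → ℂ) : Psi φ 3 3 = ![0, c * (c * (c * (φ 0 - φ 1)))] := by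
  rw [show Psi φ 3 3 = Psi φ (2+1) 3 from rfl, psi_succ,
    show (3:ℤ)-1 = 2 by norm_num, show (3:ℤ)+1 = 4 by norm_num,
    psi_zero_of_lt φ 2 4 (by norm_num), psi2_two, matQ_mulVec, Matrix.mulVec_zero]
  funext i; fin_cases i <;> simp <;> ring_nf

lemma psi3_neg2 (φ : Fin 2 → ℂ) : Psi φ 3 (-2) = 0 := by
  rw [show Psi φ 3 (-2) = Psi φ (2+1) (-2) from rfl, psi_succ,
    show (-2:ℤ)-1 = -3 by norm_num, show (-2:ℤ)+1 = -1 by norm_num,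
    psi_zero_of_lt φ 2 (-3) (by norm_num), psi2_neg1, Matrix.mulVec_zero, Matrix.mulVec_zero,
    add_zero]

lemma psi3_two (φ : Fin 2 → ℂ) : Psi φ 3 2 = 0 := by
  rw [show Psi φ 3 2 = Psi φ (2+1) 2 from rfl, psi_succ,
    show (2:ℤ)-1 = 1 by norm_num, show (2:ℤ)+1 = 3 by norm_num,
    psi_zero_of_lt φ 2 3 (by norm_num), psi2_one, Matrix.mulVec_zero, Matrix.mulVec_zero,
    add_zero]

/-! ### Norm lemmas -/

lemma vnorm_eq (v : Fin 2 → ℂ) :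
    vnorm v = Real.sqrt (Complex.normSq (v 0) + Complex.normSq (v 1)) := by
  rw [vnorm, EuclideanSpace.norm_eq]
  congr 1
  rw [Fin.sum_univ_two]
  show ‖v 0‖^2 + ‖v 1‖^2 = _
  rw [Complex.sq_norm, Complex.sq_norm]

lemma vnorm_zero : vnorm (0 : Fin 2 → ℂ) = 0 := by simp [vnorm_eq]

lemma vnorm_sq (v : Fin 2 → ℂ) :
    vnorm v ^ 2 = Complex.normSq (v 0) + Complex.normSq (v 1) := by
  rw [vnorm_eq, Real.sq_sqrt (add_nonneg (Complex.normSq_nonneg _) (Complex.normSq_nonneg _))]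

lemma vnorm_smul (a : ℂ) (v : Fin 2 → ℂ) :
    vnorm (a • v) = ‖a‖ * vnorm v := by
  rw [vnorm_eq, vnorm_eq, Complex.norm_def, ← Real.sqrt_mul (Complex.normSq_nonneg a)]
  congr 1
  simp only [Pi.smul_apply, smul_eq_mul, Complex.normSq_mul]
  ring

lemma normSq_c : Complex.normSq ((Real.sqrt 2 : ℂ))⁻¹ = 2⁻¹ := by
  rw [Complex.normSq_inv, Complex.normSq_ofReal, Real.mul_self_sqrt (by norm_num)]

/-! ### The swap-negate symmetry -/

/-- swap-and-negate map -/
def sw (v : Fin 2 → ℂ) : Fin 2 → ℂ := ![v 1, -v 0]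

lemma sw_add (u v : Fin 2 → ℂ) : sw (u + v) = sw u + sw v := by
  funext i; fin_cases i <;> simp [sw] <;> ring

lemma sw_zero : sw 0 = 0 := by funext i; fin_cases i <;> simp [sw]

lemma matQ_sw (v : Fin 2 → ℂ) : matQ.mulVec (sw v) = -sw (matP.mulVec v) := by
  funext i
  fin_cases i <;> simp [sw, matP_mulVec, matQ_mulVec, matP, matQ, Matrix.vecHead, Matrix.vecTail] <;> ring

lemma matP_sw (v : Fin 2 → ℂ) : matP.mulVec (sw v) = -sw (matQ.mulVec v) := by
  funext i
  fin_cases i <;> simp [sw, matP_mulVec, matQ_mulVec, matP, matQ, Matrix.vecHead, Matrix.vecTail] <;> ring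

lemma vnorm_sw (v : Fin 2 → ℂ) : vnorm (sw v) = vnorm v := by
  rw [vnorm_eq, vnorm_eq]
  simp only [sw, Matrix.cons_val_zero, Matrix.cons_val_one, Matrix.head_cons,
    Complex.normSq_neg]
  rw [add_comm]

lemma psi_smul (φ : Fin 2 → ℂ) (a : ℂ) : ∀ (n : ℕ) (k : ℤ),
    Psi (a • φ) n k = a • Psi φ n k := by
  intro n
  induction n with
  | zero => intro k; by_cases hk : k = 0 <;> simp [Psi, hk]
  | succ n ih =>
      intro k
      rw [Psi, Psi, ih, ih, Matrix.mulVec_smul, Matrix.mulVec_smul, smul_add]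

lemma psi_reflect (φ : Fin 2 → ℂ) : ∀ (n : ℕ) (k : ℤ),
    Psi (sw φ) n (-k) = ((-1 : ℂ))^n • sw (Psi φ n k) := by
  intro n
  induction n with
  | zero =>
      intro k
      by_cases hk : k = 0 <;> simp [Psi, hk, sw_zero]
  | succ n ih =>
      intro k
      rw [Psi, Psi]
      have h1 : (-k - 1 : ℤ) = -(k+1) := by ring
      have h2 : (-k + 1 : ℤ) = -(k-1) := by ring
      rw [h1, h2, ih, ih, Matrix.mulVec_smul, Matrix.mulVec_smul, matQ_sw, matP_sw,
        sw_add, pow_succ]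
      rw [smul_add]
      rw [show ((-1:ℂ))^n * -1 = -((-1:ℂ))^n by ring]
      rw [neg_smul, neg_smul, smul_neg, smul_neg]
      abel

lemma symm_of_sw (φ : Fin 2 → ℂ) (a : ℂ) (habs : ‖a‖ = 1) (h : sw φ = a • φ)
    (n : ℕ) (k : ℤ) : vnorm (Psi φ n k) = vnorm (Psi φ n (-k)) := by
  have h1 := psi_reflect φ n k
  rw [h, psi_smul] at h1
  have h2 := congrArg vnorm h1
  rw [vnorm_smul, vnorm_smul, vnorm_sw, habs, one_mul] at h2
  rw [norm_pow, norm_neg, norm_one, one_pow, one_mul] at h2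
  exact h2.symm

/-! ### Expectation computations -/

lemma expectation_eq_sum (φ : Fin 2 → ℂ) (n : ℕ) :
    expectation φ n = ∑ k ∈ Finset.Icc (-(n:ℤ)) n, (k : ℝ) * (vnorm (Psi φ n k))^2 := by
  refine tsum_eq_sum ?_
  intro k hk
  rw [Finset.mem_Icc] at hk
  push_neg at hk
  have h : (n : ℤ) < |k| := by
    rcases abs_cases k with ⟨h, _⟩ | ⟨h, _⟩ <;> omega
  rw [psi_zero_of_lt φ n k h, vnorm_zero]
  ring

lemma exp1_val (φ : Fin 2 → ℂ) :
    expectation φ 1 = 2⁻¹ * (Complex.normSq (φ 0 - φ 1) - Complex.normSq (φ 0 + φ 1)) := by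
  rw [expectation_eq_sum]
  rw [show Finset.Icc (-(1:ℕ):ℤ) (1:ℕ) = {-1, 0, 1} by decide]
  rw [show ∀ f : ℤ → ℝ, ∑ k ∈ ({-1, 0, 1} : Finset ℤ), f k = f (-1) + f 0 + f 1 from
    fun f => by norm_num [Finset.sum_insert, Finset.mem_insert]; ring]
  rw [psi1_neg1, psi1_one, psi1_zero]
  simp only [vnorm_sq, vnorm_zero, Matrix.cons_val_zero, Matrix.cons_val_one, Matrix.head_cons,
    Complex.normSq_mul, normSq_c, Complex.normSq_zero, Pi.zero_apply]
  push_cast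
  ring

lemma exp3_val (φ : Fin 2 → ℂ) :
    expectation φ 3 = 2⁻¹ * (Complex.normSq (φ 0 - φ 1) - Complex.normSq (φ 0 + φ 1))
      + 2⁻¹ * (Complex.normSq (φ 1) - Complex.normSq (φ 0)) := by
  rw [expectation_eq_sum]
  rw [show Finset.Icc (-(3:ℕ):ℤ) (3:ℕ) = {-3, -2, -1, 0, 1, 2, 3} by decide]
  rw [show ∀ f : ℤ → ℝ, ∑ k ∈ ({-3, -2, -1, 0, 1, 2, 3} : Finset ℤ), f k
      = f (-3) + f (-2) + f (-1) + f 0 + f 1 + f 2 + f 3 from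
    fun f => by norm_num [Finset.sum_insert, Finset.mem_insert]; ring]
  rw [psi3_neg3, psi3_neg2, psi3_neg1, psi3_one, psi3_two, psi3_three]
  simp only [vnorm_sq, Matrix.cons_val_zero, Matrix.cons_val_one, Matrix.head_cons,
    Complex.normSq_mul, normSq_c, Complex.normSq_zero, Complex.normSq_neg, Pi.zero_apply,
    Complex.normSq_ofNat]
  push_cast
  ring

/-! ### The three inclusions -/

lemma perp_subset_s : PhiPerp ⊆ PhiS := by
  rintro φ ⟨hnorm, habs, hperp⟩
  refine ⟨hnorm, ?_⟩
  -- φ 0 ≠ 0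
  have hα : φ 0 ≠ 0 := by
    intro h0
    rw [h0, norm_zero] at habs
    rw [h0, norm_zero, ← habs] at hnorm
    norm_num at hnorm
  have hαc : (starRingEnd ℂ) (φ 0) ≠ 0 := by
    intro h0
    exact hα (by simpa using congrArg (starRingEnd ℂ) h0)
  -- |φ0|² = |φ1|² as a complex identity
  have hns : Complex.normSq (φ 0) = Complex.normSq (φ 1) := by
    rw [← Complex.sq_norm, ← Complex.sq_norm, habs]
  have hK1 : φ 0 * (starRingEnd ℂ) (φ 0) = φ 1 * (starRingEnd ℂ) (φ 1) := by
    rw [Complex.mul_conj, Complex.mul_conj]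
    exact_mod_cast hns
  -- φ0² + φ1² = 0
  have hkey : (starRingEnd ℂ) (φ 0) * (φ 0^2 + φ 1^2) = 0 := by
    linear_combination φ 0 * hK1 + φ 1 * hperp
  have hsum : φ 0^2 + φ 1^2 = 0 := by
    rcases mul_eq_zero.mp hkey with h | h
    · exact absurd h hαc
    · exact h
  have hfac : (φ 1 - Complex.I * φ 0) * (φ 1 + Complex.I * φ 0) = 0 := by
    linear_combination hsum - φ 0^2 * Complex.I_sq
  intro n k
  rcases mul_eq_zero.mp hfac with h | h
  · have hc : φ 1 = Complex.I * φ 0 := sub_eq_zero.mp h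
    refine symm_of_sw φ Complex.I (by simp) ?_ n k
    funext i
    fin_cases i <;> simp [sw, hc, Pi.smul_apply, smul_eq_mul]
    linear_combination (-(φ 0)) * Complex.I_mul_I
  · have hc : φ 1 = -(Complex.I * φ 0) := eq_neg_of_add_eq_zero_left h
    refine symm_of_sw φ (-Complex.I) (by simp) ?_ n k
    funext i
    fin_cases i <;> simp [sw, hc, Pi.smul_apply, smul_eq_mul]
    linear_combination (-(φ 0)) * Complex.I_mul_I

lemma s_subset_0 : PhiS ⊆ Phi0 := by
  rintro φ ⟨hnorm, hsym⟩
  refine ⟨hnorm, ?_⟩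
  intro n
  have key : ∀ k : ℤ, ((-k : ℤ) : ℝ) * vnorm (Psi φ n (-k))^2
      = -((k:ℝ) * vnorm (Psi φ n k)^2) := by
    intro k
    rw [← hsym n k]
    push_cast
    ring
  have h0 : expectation φ n = ∑' k : ℤ, ((-k:ℤ):ℝ) * vnorm (Psi φ n (-k))^2 :=
    ((Equiv.neg ℤ).tsum_eq (fun k => (k:ℝ) * vnorm (Psi φ n k)^2)).symm
  rw [funext key] at h0
  rw [tsum_neg] at h0
  have : expectation φ n = - expectation φ n := h0
  linarith

lemma zero_subset_perp : Phi0 ⊆ PhiPerp := by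
  rintro φ ⟨hnorm, hE⟩
  have e1 : Complex.normSq (φ 0 - φ 1) = Complex.normSq (φ 0 + φ 1) := by
    have h := hE 1
    rw [exp1_val] at h
    linarith
  have e3 : Complex.normSq (φ 1) = Complex.normSq (φ 0) := by
    have h := hE 3
    rw [exp3_val] at h
    linarith
  refine ⟨hnorm, ?_, ?_⟩
  · rw [Complex.norm_def, Complex.norm_def, e3]
  · have hA := Complex.mul_conj (φ 0 + φ 1)
    have hB := Complex.mul_conj (φ 0 - φ 1)
    rw [map_add] at hA
    rw [map_sub] at hB
    have hC : ((Complex.normSq (φ 0 + φ 1) : ℝ) : ℂ)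
        = ((Complex.normSq (φ 0 - φ 1) : ℝ) : ℂ) := by
      exact_mod_cast congrArg Complex.ofReal e1.symm
    linear_combination (1/2 : ℂ) * hA - (1/2 : ℂ) * hB + (1/2 : ℂ) * hC

theorem phi_perp_eq_phi_s_eq_phi_0 : PhiPerp = PhiS ∧ PhiS = Phi0 := by
  have h1 : PhiPerp ⊆ PhiS := perp_subset_s
  have h2 : PhiS ⊆ Phi0 := s_subset_0
  have h3 : Phi0 ⊆ PhiPerp := zero_subset_perp
  exact ⟨h1.antisymm (h2.trans h3), h2.antisymm (h3.trans h1)⟩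
end
end

section
/- Let γ ≥ 1, l ≥ 1, m ≥ 2, n = l+m, and let w_1, …, w_{2γ+1} be positive integers with w_2 + w_4 + ⋯ + w_{2γ} = l and w_1 + w_3 + ⋯ + w_{2γ+1} = m. Then the alternating block product Q^{w_1} P^{w_2} Q^{w_3} ⋯ P^{w_{2γ}} Q^{w_{2γ+1}} equals (1/√2)^{n-1} · (-1)^{m+γ+1} · Q. -/
/-!
`Q² = -Q/√2`, `P² = P/√2` and `QPQ = Q/2`, so every block collapses to a scalar multiple of a
single `Q` or `P`, and then each `P`-block together with the following `Q` collapses into the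
preceding `Q`. The scalars multiply to `(1/√2)^(n-1)` up to the sign `(-1)^(m + γ + 1)`.
-/

noncomputable section
open Matrix Finset

theorem pow_succ_eq_smul_of_mul_self_eq_smul {R A : Type*} [CommSemiring R] [Semiring A]
    [Algebra R A] {x : A} {r : R} (h : x * x = r • x) (k : ℕ) : x ^ (k + 1) = r ^ k • x := by
  induction k with
  | zero => simp
  | succ k ih => rw [pow_succ, ih, smul_mul_assoc, h, smul_smul, ← pow_succ]

section AlternatingProduct

variable {R A : Type*} [CommRing R] [Ring A] [Algebra R A] {a b : A} {t : R}

theorem prod_ofFn_alternating_pow (haa : a * a = -t • a) (hbb : b * b = t • b)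
    (haba : a * b * a = t ^ 2 • a) (γ : ℕ) (w : Fin (2 * γ + 1) → ℕ) (hw : ∀ i, 1 ≤ w i) :
    (List.ofFn fun i : Fin (2 * γ + 1) => (if i.val % 2 = 0 then a else b) ^ w i).prod
      = (t ^ (∑ i, w i - 1) * (-1) ^ (∑ i, (if i.val % 2 = 0 then w i else 0) + γ + 1)) • a := by
  induction γ with
  | zero =>
    obtain ⟨k, hk⟩ := Nat.exists_eq_add_of_le' (hw 0)
    simp [hk, pow_succ_eq_smul_of_mul_self_eq_smul haa, neg_pow t, pow_succ, mul_comm]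
  | succ γ ih =>
    rw [List.ofFn_succ' (n := 2 * γ + 1 + 1), List.prod_concat,
      List.ofFn_succ' (n := 2 * γ + 1), List.prod_concat]
    simp only [Fin.val_castSucc]
    -- restate the right-hand sums over `Fin (_ + 1 + 1)` so that `Fin.sum_univ_castSucc` applies
    change _ = (t ^ (∑ i : Fin (2 * γ + 1 + 1 + 1), w i - 1) *
      (-1) ^ (∑ i : Fin (2 * γ + 1 + 1 + 1), (if i.val % 2 = 0 then w i else 0) + (γ + 1) + 1)) • a
    rw [Fin.sum_univ_castSucc (n := 2 * γ + 1 + 1), Fin.sum_univ_castSucc (n := 2 * γ + 1 + 1),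
      Fin.sum_univ_castSucc (n := 2 * γ + 1), Fin.sum_univ_castSucc (n := 2 * γ + 1),
      ih _ fun _ => hw _]
    simp only [Fin.val_castSucc, Fin.val_last]
    obtain ⟨p, hp⟩ := Nat.exists_eq_add_of_le' (hw (Fin.last (2 * γ + 1)).castSucc)
    obtain ⟨q, hq⟩ := Nat.exists_eq_add_of_le' (hw (Fin.last (2 * γ + 1 + 1)))
    obtain ⟨s, hs⟩ := Nat.exists_eq_add_of_le' <| (hw 0).trans <|
      single_le_sum (f := fun i : Fin (2 * γ + 1) => w i.castSucc.castSucc)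
        (fun _ _ => Nat.zero_le _) (mem_univ 0)
    have h_odd : (2 * γ + 1) % 2 ≠ 0 := by omega
    have h_even : (2 * γ + 1 + 1) % 2 = 0 := by omega
    simp only [if_neg h_odd, if_pos h_even, hp, hq, hs, add_zero,
      pow_succ_eq_smul_of_mul_self_eq_smul haa, pow_succ_eq_smul_of_mul_self_eq_smul hbb,
      smul_mul_assoc, mul_smul_comm, smul_smul, ← mul_assoc, haba]
    congr 1
    rw [Nat.add_sub_cancel, show s + 1 + (p + 1) + (q + 1) - 1 = s + p + q + 2 by omega]
    simp only [neg_pow t, pow_add]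
    ring

end AlternatingProduct

theorem matQ_mul_self : matQ * matQ = -(Real.sqrt 2 : ℂ)⁻¹ • matQ := by
  ext i j
  fin_cases i <;> fin_cases j <;> simp [matQ, Matrix.mul_apply]

theorem matP_mul_self : matP * matP = (Real.sqrt 2 : ℂ)⁻¹ • matP := by
  ext i j
  fin_cases i <;> fin_cases j <;> simp [matP, Matrix.mul_apply]

theorem matQ_mul_matP_mul_matQ : matQ * matP * matQ = (Real.sqrt 2 : ℂ)⁻¹ ^ 2 • matQ := by
  ext i j
  fin_cases i <;> fin_cases j <;> simp [matP, matQ, Matrix.mul_apply, sq]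

theorem alternating_block_product_Q_general (γ l m : ℕ)
    (w : Fin (2 * γ + 1) → ℕ) (hw : ∀ i, 1 ≤ w i)
    (hP : ∑ i ∈ Finset.univ.filter (fun i : Fin (2 * γ + 1) => i.val % 2 = 1), w i = l)
    (hQ : ∑ i ∈ Finset.univ.filter (fun i : Fin (2 * γ + 1) => i.val % 2 = 0), w i = m) :
    (List.ofFn (fun i : Fin (2 * γ + 1) =>
        (if i.val % 2 = 0 then matQ else matP) ^ (w i))).prod
    = ((Real.sqrt 2 : ℂ)⁻¹ ^ (l + m - 1) * (-1 : ℂ) ^ (m + γ + 1)) • matQ := by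
  have htotal : ∑ i, w i = l + m := by
    rw [← sum_filter_add_sum_filter_not univ (fun i : Fin (2 * γ + 1) => i.val % 2 = 0)]
    simp_rw [Nat.mod_two_ne_zero]
    rw [hP, hQ, add_comm]
  rw [prod_ofFn_alternating_pow matQ_mul_self matP_mul_self matQ_mul_matP_mul_matQ γ w hw,
    htotal, ← sum_filter, hQ]

/-- The alternating block product `Q^{w_1} P^{w_2} Q^{w_3} ⋯ P^{w_{2γ}} Q^{w_{2γ+1}}`
(the block with 0-based index `i` is a power of `Q` if `i` is even, of `P` if `i` is odd). -/
theorem alternating_block_product_Q (γ l m : ℕ) (hγ : 1 ≤ γ) (hl : 1 ≤ l) (hm : 2 ≤ m)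
    (w : Fin (2 * γ + 1) → ℕ) (hw : ∀ i, 1 ≤ w i)
    (hP : ∑ i ∈ Finset.univ.filter (fun i : Fin (2 * γ + 1) => i.val % 2 = 1), w i = l)
    (hQ : ∑ i ∈ Finset.univ.filter (fun i : Fin (2 * γ + 1) => i.val % 2 = 0), w i = m) :
    (List.ofFn (fun i : Fin (2 * γ + 1) =>
        (if i.val % 2 = 0 then matQ else matP) ^ (w i))).prod
    = ((Real.sqrt 2 : ℂ)⁻¹ ^ (l + m - 1) * (-1 : ℂ) ^ (m + γ + 1)) • matQ :=
  alternating_block_product_Q_general γ l m w hw hP hQ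
end
end

section
/- For all integers l, m ≥ 0 with l + m ≥ 1, there exist complex numbers a and b such that ᵗΞ(l,m)·Ξ(l,m) − ᵗΞ(m,l)·Ξ(m,l) = [[a, b], [b, −a]], where ᵗA denotes the transpose of A. -/
/-!
Conjugation by the rotation `T = !![0, 1; -1, 0]` sends `P ↦ -Q` and `Q ↦ -P`, and passing to the
complement of the set of `P`-positions turns the swapped words of `Ξ(l,m)` into the words of
`Ξ(m,l)`; hence `T Ξ(l,m) Tᵀ = (-1)^(l+m) Ξ(m,l)`. Since `T` is orthogonal, this gives
`Ξ(m,l)ᵀ Ξ(m,l) = T A Tᵀ` with `A = Ξ(l,m)ᵀ Ξ(l,m)`, and `A - T A Tᵀ` has the required shape for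
every `2 × 2` matrix `A`.
-/
noncomputable section
open Matrix Finset

/-- `R = (1/√2)·[[1,-1],[0,0]]` -/
def matR : Matrix (Fin 2) (Fin 2) ℂ := (Real.sqrt 2 : ℂ)⁻¹ • !![1, -1; 0, 0]

/-- `S = (1/√2)·[[0,0],[1,1]]` -/
def matS : Matrix (Fin 2) (Fin 2) ℂ := (Real.sqrt 2 : ℂ)⁻¹ • !![0, 0; 1, 1]

/-- `Ξ(l,m)`: the sum, over all words of length `l+m` over the alphabet `{P,Q}` with exactly
`l` letters `P` and `m` letters `Q` (a word being encoded by the set `s` of positions of its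
letters `P`), of the ordered matrix product of the letters of the word. -/
def Xi (l m : ℕ) : Matrix (Fin 2) (Fin 2) ℂ :=
  ∑ s ∈ (Finset.univ : Finset (Fin (l + m))).powersetCard l,
    (List.ofFn (fun i : Fin (l + m) => if i ∈ s then matP else matQ)).prod

section wordSum

variable {M : Type*}

def wordSum [Semiring M] (x y : M) (n k : ℕ) : M :=
  ∑ s ∈ (univ : Finset (Fin n)).powersetCard k,
    (List.ofFn fun i : Fin n => if i ∈ s then x else y).prod

theorem wordSum_swap [Semiring M] (x y : M) (k j : ℕ) :
    wordSum x y (k + j) k = wordSum y x (k + j) j := by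
  refine sum_nbij' compl compl (fun s hs => ?_) (fun s hs => ?_) (fun s _ => compl_compl s)
    (fun s _ => compl_compl s) (fun s _ => ?_)
  · simp_all [card_compl]
  · simp_all [card_compl]
  · simp only [mem_compl, ite_not]

theorem wordSum_neg [Ring M] (x y : M) (n k : ℕ) :
    wordSum (-x) (-y) n k = (-1 : ℤ) ^ n • wordSum x y n k := by
  rw [wordSum, wordSum, smul_sum]
  refine sum_congr rfl fun s _ => ?_
  have hword : (List.ofFn fun i : Fin n => if i ∈ s then -x else -y) =
      (List.ofFn fun i => if i ∈ s then x else y).map Neg.neg := by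
    simp only [List.map_ofFn, Function.comp_def, apply_ite]
  rw [hword, List.prod_map_neg, List.length_ofFn, zsmul_eq_mul, Int.cast_pow, Int.cast_neg,
    Int.cast_one]

theorem mul_wordSum_mul_of_mul_eq_one [Semiring M] {u v : M} (huv : u * v = 1) (hvu : v * u = 1)
    (x y : M) (n k : ℕ) :
    u * wordSum x y n k * v = wordSum (u * x * v) (u * y * v) n k := by
  -- conjugation by a unit is the `ConjAct` action, which distributes over products and sums
  have conj_eq_smul (z : M) : u * z * v = ConjAct.toConjAct (⟨u, v, huv, hvu⟩ : Mˣ) • z := rfl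
  simp only [conj_eq_smul, wordSum, smul_sum, List.smul_prod', List.map_ofFn, Function.comp_def,
    smul_ite]

end wordSum

theorem Matrix.transpose_mul_self_conj {n R : Type*} [Fintype n] [DecidableEq n] [CommSemiring R]
    {O : Matrix n n R} (hO : Oᵀ * O = 1) (X : Matrix n n R) :
    (O * X * Oᵀ)ᵀ * (O * X * Oᵀ) = O * (Xᵀ * X) * Oᵀ := by
  simp only [transpose_mul, transpose_transpose, Matrix.mul_assoc]
  rw [← Matrix.mul_assoc Oᵀ O, hO, Matrix.one_mul]

theorem Matrix.transpose_mul_self_neg_one_pow_zsmul {n R : Type*} [Fintype n] [CommRing R]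
    (k : ℕ) (X : Matrix n n R) :
    ((-1 : ℤ) ^ k • X)ᵀ * ((-1 : ℤ) ^ k • X) = Xᵀ * X := by
  rw [transpose_smul, smul_mul_smul_comm, pow_mul_pow_eq_one k (by norm_num), one_smul]

section rotation

variable {R : Type*} [CommRing R]

def rot90 : Matrix (Fin 2) (Fin 2) R := !![0, 1; -1, 0]

theorem rot90_transpose : (rot90 : Matrix (Fin 2) (Fin 2) R)ᵀ = !![0, -1; 1, 0] := by
  ext i j; fin_cases i <;> fin_cases j <;> rfl

theorem rot90_mul_transpose : rot90 * rot90ᵀ = (1 : Matrix (Fin 2) (Fin 2) R) := by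
  rw [rot90_transpose]; simp [rot90, one_fin_two]

theorem transpose_rot90_mul : rot90ᵀ * rot90 = (1 : Matrix (Fin 2) (Fin 2) R) := by
  rw [rot90_transpose]; simp [rot90, one_fin_two]

theorem sub_rot90_conj (A : Matrix (Fin 2) (Fin 2) R) :
    A - rot90 * A * rot90ᵀ =
      !![A 0 0 - A 1 1, A 0 1 + A 1 0; A 0 1 + A 1 0, -(A 0 0 - A 1 1)] := by
  rw [rot90_transpose, eta_fin_two A]; simp [rot90, add_comm]

end rotation

theorem Xi_eq_wordSum (l m : ℕ) : Xi l m = wordSum matP matQ (l + m) l := rfl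

theorem rot90_conj_matP : rot90 * matP * rot90ᵀ = -matQ := by
  rw [rot90_transpose]; ext i j; fin_cases i <;> fin_cases j <;> simp [rot90, matP, matQ]

theorem rot90_conj_matQ : rot90 * matQ * rot90ᵀ = -matP := by
  rw [rot90_transpose]; ext i j; fin_cases i <;> fin_cases j <;> simp [rot90, matP, matQ]

theorem rot90_conj_Xi (l m : ℕ) : rot90 * Xi l m * rot90ᵀ = (-1 : ℤ) ^ (l + m) • Xi m l := by
  rw [Xi_eq_wordSum, mul_wordSum_mul_of_mul_eq_one rot90_mul_transpose transpose_rot90_mul,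
    rot90_conj_matP, rot90_conj_matQ, wordSum_neg, wordSum_swap, add_comm, Xi_eq_wordSum]

theorem xi_difference_form_general (l m : ℕ) :
    ∃ a b : ℂ, (Xi l m)ᵀ * Xi l m - (Xi m l)ᵀ * Xi m l = !![a, b; b, -a] := by
  have hconj : (Xi m l)ᵀ * Xi m l = rot90 * ((Xi l m)ᵀ * Xi l m) * rot90ᵀ := by
    rw [← transpose_mul_self_neg_one_pow_zsmul (l + m), ← rot90_conj_Xi,
      transpose_mul_self_conj transpose_rot90_mul]
  exact ⟨_, _, hconj ▸ sub_rot90_conj _⟩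

theorem xi_difference_form (l m : ℕ) (hlm : 1 ≤ l + m) :
    ∃ a b : ℂ, (Xi l m)ᵀ * Xi l m - (Xi m l)ᵀ * Xi m l = !![a, b; b, -a] :=
  xi_difference_form_general l m
end
end
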